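/- arXiv:2511.19139 — 3 statements merged into one kernel-verified Lean document; each statement's English description precedes it below -/
import Mathlib

section
/- Let γ ∈ SL(2,ℤ) and let k ≥ 1 be an integer. If det(1 - γ^k) = 0 (as a 2×2 integer matrix), then either γ^k = 1, or there exists a nonzero integer m such that γ is conjugate in SL(2,ℤ) to T^m or to -T^m. Moreover, for any δ ∈ SL(2,ℤ), det(1 - δ) = 2 - tr(δ); in particular det(1 - δ) = 0 if and only if tr(δ) = 2. -/
/-- The shear matrix `T = [[1,1],[0,1]]` as an element of `SL(2,ℤ)`. -/
def T : Matrix.SpecialLinearGroup (Fin 2) ℤ :=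
  ⟨!![1, 1; 0, 1], by norm_num [Matrix.det_fin_two_of]⟩

/-!
`det(1 - δ) = 1 - tr δ + det δ` for any `2 × 2` matrix, which gives the trace formula. If
`tr γ^k = 2`, then `1 - γ^k` is singular, so `γ^k` fixes a primitive vector of `ℤ²`; moving it to
`e₁` by an element of `SL(2,ℤ)` makes `γ^k` upper unitriangular, i.e. conjugate to some `T^n`, and
`n = 0` exactly when `γ^k = 1`. Otherwise the corresponding conjugate `δ` of `γ` commutes with
`δ^k = T^n`, so it preserves the line `ℤe₁` fixed by `T^n`, and `det δ = 1` forces `δ = ±T^m`,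
with `m ≠ 0` since `(±1)^k ≠ T^n`.
-/

open Matrix
open scoped MatrixGroups

local notation:1024 "↑ₘ" A:1024 => ((A : SL(2, ℤ)) : Matrix (Fin 2) (Fin 2) ℤ)

lemma IsConj.exists_isConj_pow_eq {G : Type*} [Group G] {a b : G} {k : ℕ}
    (h : IsConj a (b ^ k)) : ∃ d, IsConj d b ∧ d ^ k = a := by
  obtain ⟨c, hc⟩ := isConj_iff.mp h
  refine ⟨c⁻¹ * b * c, isConj_iff.mpr ⟨c, by group⟩, ?_⟩
  simpa [← hc, mul_assoc] using conj_pow (a := c⁻¹) (b := b) (i := k)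

lemma Matrix.det_one_sub_fin_two {R : Type*} [CommRing R] (A : Matrix (Fin 2) (Fin 2) R) :
    (1 - A).det = 1 - A.trace + A.det := by
  simp only [det_fin_two, trace_fin_two, sub_apply, one_apply_eq, ne_eq, zero_ne_one,
    not_false_eq_true, one_apply_ne, one_ne_zero]
  ring

lemma Matrix.SpecialLinearGroup.det_one_sub_fin_two {R : Type*} [CommRing R] (A : SL(2, R)) :
    (1 - (A : Matrix (Fin 2) (Fin 2) R)).det = 2 - (A : Matrix (Fin 2) (Fin 2) R).trace := by
  rw [Matrix.det_one_sub_fin_two, A.2]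
  ring

lemma Matrix.exists_isCoprime_mulVec_eq_zero (N : Matrix (Fin 2) (Fin 2) ℤ) (hN : N.det = 0) :
    ∃ v : Fin 2 → ℤ, IsCoprime (v 0) (v 1) ∧ N *ᵥ v = 0 := by
  obtain ⟨w, hw0, hw⟩ := exists_mulVec_eq_zero_iff.mpr hN
  have hgcd : 0 < Int.gcd (w 0) (w 1) := by
    refine Int.gcd_pos_iff.mpr (not_and_or.mp fun h ↦ hw0 ?_)
    ext i; fin_cases i <;> simp [h.1, h.2]
  obtain ⟨g, p, q, hg, hpq, hp, hq⟩ := Int.exists_gcd_one' hgcd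
  have hw' : w = g • ![p, q] := by
    ext i; fin_cases i <;> simp [hp, hq, mul_comm]
  refine ⟨![p, q], Int.isCoprime_iff_gcd_eq_one.mpr (by simpa using hpq), ?_⟩
  rw [hw', mulVec_smul] at hw
  exact (smul_eq_zero.mp hw).resolve_left (by exact_mod_cast hg.ne')

lemma Matrix.SpecialLinearGroup.exists_mulVec_eq_of_isCoprime {R : Type*} [CommRing R]
    (v : Fin 2 → R) (hv : IsCoprime (v 0) (v 1)) :
    ∃ g : SL(2, R), (g : Matrix (Fin 2) (Fin 2) R) *ᵥ ![1, 0] = v := by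
  obtain ⟨s, t, hst⟩ := hv
  refine ⟨⟨!![v 0, -t; v 1, s], by rw [det_fin_two_of]; linear_combination hst⟩, ?_⟩
  ext i; fin_cases i <;> simp

lemma coe_T_zpow (n : ℤ) : ↑ₘ(T ^ n) = !![1, n; 0, 1] :=
  ModularGroup.coe_T_zpow n

lemma eq_T_zpow_of_trace_eq_two (C : SL(2, ℤ)) (h10 : ↑ₘC 1 0 = 0) (htr : trace ↑ₘC = 2) :
    C = T ^ (↑ₘC 0 1) := by
  have hdet := C.2
  rw [det_fin_two, h10, mul_zero, sub_zero] at hdet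
  rw [trace_fin_two] at htr
  obtain ⟨h00, h11⟩ : ↑ₘC 0 0 = 1 ∧ ↑ₘC 1 1 = 1 := by
    rcases Int.eq_one_or_neg_one_of_mul_eq_one' hdet with h | h
    · exact h
    · omega
  ext i j
  fin_cases i <;> fin_cases j <;> simp [coe_T_zpow, h00, h10, h11]

lemma isConj_T_zpow_of_trace_eq_two (B : SL(2, ℤ)) (htr : trace ↑ₘB = 2) :
    ∃ n : ℤ, IsConj (T ^ n) B := by
  have hsing : (1 - ↑ₘB).det = 0 := by
    rw [Matrix.SpecialLinearGroup.det_one_sub_fin_two, htr, sub_self]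
  obtain ⟨v, hv, hBv⟩ := exists_isCoprime_mulVec_eq_zero _ hsing
  obtain ⟨g, hg⟩ := Matrix.SpecialLinearGroup.exists_mulVec_eq_of_isCoprime v hv
  obtain ⟨C, hC⟩ : ∃ C, C = g⁻¹ * B * g := ⟨_, rfl⟩
  -- `C` fixes `e₁` because `B` fixes `v = g e₁`.
  have hCe : ↑ₘC *ᵥ ![1, 0] = ![1, 0] := by
    rw [sub_mulVec, one_mulVec, sub_eq_zero] at hBv
    rw [hC, Matrix.SpecialLinearGroup.coe_mul, Matrix.SpecialLinearGroup.coe_mul, ← mulVec_mulVec,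
      ← mulVec_mulVec, hg, ← hBv, ← hg, mulVec_mulVec, ← Matrix.SpecialLinearGroup.coe_mul,
      inv_mul_cancel, Matrix.SpecialLinearGroup.coe_one, one_mulVec]
  have h10 : ↑ₘC 1 0 = 0 := by
    simpa using congrFun hCe 1
  have hCtr : trace ↑ₘC = 2 := by
    rw [← htr, hC, Matrix.SpecialLinearGroup.coe_mul, Matrix.SpecialLinearGroup.coe_mul,
      trace_mul_cycle, ← Matrix.SpecialLinearGroup.coe_mul, mul_inv_cancel,
      Matrix.SpecialLinearGroup.coe_one, Matrix.one_mul]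
  refine ⟨↑ₘC 0 1, isConj_iff.mpr ⟨g, ?_⟩⟩
  rw [← eq_T_zpow_of_trace_eq_two C h10 hCtr, hC]
  group

lemma eq_T_zpow_or_eq_neg_T_zpow_of_commute (δ : SL(2, ℤ)) {n : ℤ}
    (hn : n ≠ 0) (h : Commute δ (T ^ n)) : ∃ m : ℤ, δ = T ^ m ∨ δ = -(T ^ m) := by
  have h10 : ↑ₘδ 1 0 = 0 := by
    have h00 := congrArg (fun X : SL(2, ℤ) ↦ ↑ₘX 0 0) h.eq
    simpa [Matrix.SpecialLinearGroup.coe_mul, coe_T_zpow, mul_apply, hn] using h00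
  have hdet := δ.2
  rw [det_fin_two, h10, mul_zero, sub_zero] at hdet
  rcases Int.eq_one_or_neg_one_of_mul_eq_one' hdet with ⟨h00, h11⟩ | ⟨h00, h11⟩
  · exact ⟨_, .inl (eq_T_zpow_of_trace_eq_two δ h10 (by simp [trace_fin_two, h00, h11]))⟩
  · refine ⟨_, .inr (neg_eq_iff_eq_neg.mp (eq_T_zpow_of_trace_eq_two (-δ) ?_ ?_))⟩
    · simp [h10]
    · simp [trace_fin_two, h00, h11]

theorem stmt1_general (γ : Matrix.SpecialLinearGroup (Fin 2) ℤ) (k : ℕ)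
    (h : (1 - ((γ ^ k : Matrix.SpecialLinearGroup (Fin 2) ℤ) :
        Matrix (Fin 2) (Fin 2) ℤ)).det = 0) :
    (γ ^ k = 1 ∨
      ∃ m : ℤ, m ≠ 0 ∧ (IsConj (T ^ m) γ ∨ IsConj (-(T ^ m)) γ)) ∧
    ∀ δ : Matrix.SpecialLinearGroup (Fin 2) ℤ,
      (1 - (δ : Matrix (Fin 2) (Fin 2) ℤ)).det =
          2 - Matrix.trace ((δ : Matrix (Fin 2) (Fin 2) ℤ)) ∧
        ((1 - (δ : Matrix (Fin 2) (Fin 2) ℤ)).det = 0 ↔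
          Matrix.trace ((δ : Matrix (Fin 2) (Fin 2) ℤ)) = 2) := by
  have hdet := Matrix.SpecialLinearGroup.det_one_sub_fin_two (R := ℤ)
  refine ⟨?_, fun δ ↦ ⟨hdet δ, by rw [hdet δ, sub_eq_zero, eq_comm]⟩⟩
  obtain ⟨n, hn⟩ := isConj_T_zpow_of_trace_eq_two (γ ^ k) (by linarith [hdet (γ ^ k)])
  rcases eq_or_ne n 0 with rfl | hn0
  · exact .inl (isConj_one_right.mp (by simpa using hn))
  obtain ⟨δ, hδγ, hδk⟩ := hn.exists_isConj_pow_eq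
  obtain ⟨m, hm⟩ := eq_T_zpow_or_eq_neg_T_zpow_of_commute δ hn0 (hδk ▸ Commute.self_pow δ k)
  have hm0 : m ≠ 0 := by
    rintro rfl
    -- `δ^k = (±1)^k = ±1` has upper right entry `0`, unlike `T^n`.
    have hδk01 : ↑ₘ(δ ^ k) 0 1 = 0 := by
      rcases hm with rfl | rfl <;> rcases neg_one_pow_eq_or SL(2, ℤ) k with hpow | hpow <;>
        simp [hpow]
    simp [hδk, coe_T_zpow, hn0] at hδk01
  rcases hm with rfl | rfl
  exacts [.inr ⟨m, hm0, .inl hδγ⟩, .inr ⟨m, hm0, .inr hδγ⟩]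

/-- if `det(1 - γ^k) = 0` then `γ^k = 1` or `γ` is conjugate in `SL(2,ℤ)`
to `T^m` or `-T^m` for some nonzero integer `m`; moreover for any `δ ∈ SL(2,ℤ)` we have
`det(1 - δ) = 2 - tr δ`, so `det(1 - δ) = 0 ↔ tr δ = 2`. -/
theorem stmt1 (γ : Matrix.SpecialLinearGroup (Fin 2) ℤ) (k : ℕ) (hk : 1 ≤ k)
    (h : (1 - ((γ ^ k : Matrix.SpecialLinearGroup (Fin 2) ℤ) :
        Matrix (Fin 2) (Fin 2) ℤ)).det = 0) :
    (γ ^ k = 1 ∨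
      ∃ m : ℤ, m ≠ 0 ∧ (IsConj (T ^ m) γ ∨ IsConj (-(T ^ m)) γ)) ∧
    ∀ δ : Matrix.SpecialLinearGroup (Fin 2) ℤ,
      (1 - (δ : Matrix (Fin 2) (Fin 2) ℤ)).det =
          2 - Matrix.trace ((δ : Matrix (Fin 2) (Fin 2) ℤ)) ∧
        ((1 - (δ : Matrix (Fin 2) (Fin 2) ℤ)).det = 0 ↔
          Matrix.trace ((δ : Matrix (Fin 2) (Fin 2) ℤ)) = 2) :=
  stmt1_general γ k h
end

section
/- Let γ ∈ SL(2,ℤ) and k ≥ 1. Let c ∈ Equiv.Perm (Fin k) be the k-cycle (1 2 ⋯ k), and let P be the ℤ-linear endomorphism of (Fin k → (Fin 2 → ℤ)) given by (P v) i = v i - γ ⬝ v (c⁻¹ i) (the block matrix Id_{2k} - c ⊗ γ). Then there is a ℤ-module isomorphism between the cokernel (Fin k → (Fin 2 → ℤ)) ⧸ range(P) and coker(1 - γ^k), and this isomorphism identifies the torsion submodules. -/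
/-!
Write `P = 1 - T`, where `T` is the cyclic shift twisted by `γ`. Since `1 - T` divides `1 - T ^ j`,
every `v` is congruent to `T ^ j v` modulo the range of `P`; moving each block `Pi.single i x` around
the cycle to index `0` shows that `x ↦ [Pi.single 0 x]` maps onto the cokernel of `P`. Its kernel is
the range of `1 - γ ^ k`: one inclusion is `T ^ k (Pi.single 0 w) = Pi.single 0 (γ ^ k w)`, and if
`Pi.single 0 x = u - T u` then `u i = γ ^ i (u 0)` for all `i`, whence `x = u 0 - γ ^ k (u 0)`.
A linear isomorphism carries torsion onto torsion.
-/

/-- The cokernel of a 2×2 integer matrix acting on `Fin 2 → ℤ`. -/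
abbrev cokerMat (M : Matrix (Fin 2) (Fin 2) ℤ) :=
  (Fin 2 → ℤ) ⧸ LinearMap.range (Matrix.toLin' M)

open LinearMap Submodule

theorem Submodule.torsion_le_comap {R M N : Type*} [CommSemiring R] [AddCommMonoid M]
    [AddCommMonoid N] [Module R M] [Module R N] (f : M →ₗ[R] N) :
    torsion R M ≤ (torsion R N).comap f := by
  rintro x ⟨a, ha⟩
  exact ⟨a, by rw [Submonoid.smul_def, ← map_smul, ← Submonoid.smul_def, ha, map_zero]⟩

theorem LinearEquiv.map_torsion {R M N : Type*} [CommSemiring R] [AddCommMonoid M]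
    [AddCommMonoid N] [Module R M] [Module R N] (e : M ≃ₗ[R] N) :
    (torsion R M).map e.toLinearMap = torsion R N := by
  refine le_antisymm (map_le_iff_le_comap.mpr (torsion_le_comap _)) ?_
  rw [map_equiv_eq_comap_symm]
  exact torsion_le_comap _

theorem Module.End.sub_pow_apply_mem_range_one_sub {R N : Type*} [Ring R] [AddCommGroup N]
    [Module R N] (T : Module.End R N) (j : ℕ) (v : N) :
    v - (T ^ j) v ∈ range (1 - T) := by
  obtain ⟨c, hc⟩ := one_sub_dvd_one_sub_pow T j
  exact ⟨c v, by rw [← Module.End.mul_apply, ← hc]; rfl⟩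

theorem val_finRotate_succ_pow_apply (n j : ℕ) (i : Fin (n + 1)) :
    ((finRotate (n + 1) ^ j) i : ℕ) = (i + j) % (n + 1) := by
  induction j with
  | zero => simp [Nat.mod_eq_of_lt i.is_lt]
  | succ j ih =>
    rw [pow_succ', Equiv.Perm.mul_apply, finRotate_apply, Fin.val_add, ih, ← add_assoc,
      Nat.add_mod (i + j) 1, Fin.val_one']

theorem finRotate_succ_pow_sub_apply (n : ℕ) (i : Fin (n + 1)) :
    (finRotate (n + 1) ^ (n + 1 - (i : ℕ))) i = 0 := by
  rw [Fin.ext_iff, val_finRotate_succ_pow_apply, Nat.add_sub_cancel' i.is_lt.le, Nat.mod_self,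
    Fin.val_zero]

theorem finRotate_succ_pow_self (n : ℕ) : finRotate (n + 1) ^ (n + 1) = 1 := by
  ext i
  rw [val_finRotate_succ_pow_apply, Nat.add_mod_right, Nat.mod_eq_of_lt i.is_lt,
    Equiv.Perm.one_apply]

section CyclicShift

variable {R M : Type*} [Ring R] [AddCommGroup M] [Module R M]

-- The block matrix `c ⊗ f` for the cyclic permutation `c = finRotate n`.
def cyclicShift (f : Module.End R M) (n : ℕ) : Module.End R (Fin n → M) :=
  LinearMap.pi fun i => f ∘ₗ LinearMap.proj ((finRotate n)⁻¹ i)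

variable (f : Module.End R M)

@[simp]
theorem cyclicShift_apply {n : ℕ} (v : Fin n → M) (i : Fin n) :
    cyclicShift f n v i = f (v ((finRotate n)⁻¹ i)) :=
  rfl

theorem cyclicShift_single {n : ℕ} (i : Fin n) (x : M) :
    cyclicShift f n (Pi.single i x) = Pi.single (finRotate n i) (f x) := by
  ext j
  simp only [cyclicShift_apply, Pi.single_apply, Equiv.Perm.inv_eq_iff_eq]
  split_ifs <;> simp

theorem cyclicShift_pow_single {n : ℕ} (j : ℕ) (i : Fin n) (x : M) :
    (cyclicShift f n ^ j) (Pi.single i x) = Pi.single ((finRotate n ^ j) i) ((f ^ j) x) := by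
  induction j with
  | zero => simp
  | succ j ih =>
    rw [pow_succ', Module.End.mul_apply, ih, cyclicShift_single, pow_succ', pow_succ',
      Equiv.Perm.mul_apply, Module.End.mul_apply]

variable (n : ℕ)

theorem mkQ_single_eq_mkQ_single_zero (i : Fin (n + 1)) (x : M) :
    (range (1 - cyclicShift f (n + 1))).mkQ (Pi.single i x) =
      (range (1 - cyclicShift f (n + 1))).mkQ (Pi.single 0 ((f ^ (n + 1 - (i : ℕ))) x)) := by
  rw [mkQ_apply, mkQ_apply, Submodule.Quotient.eq, ← finRotate_succ_pow_sub_apply n i,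
    ← cyclicShift_pow_single]
  exact Module.End.sub_pow_apply_mem_range_one_sub _ _ _

theorem mkQ_eq_mkQ_single_zero (v : Fin (n + 1) → M) :
    (range (1 - cyclicShift f (n + 1))).mkQ v =
      (range (1 - cyclicShift f (n + 1))).mkQ
        (Pi.single 0 (∑ i : Fin (n + 1), (f ^ (n + 1 - (i : ℕ))) (v i))) := by
  conv_lhs => rw [← Finset.univ_sum_single v]
  rw [map_sum, Finset.sum_congr rfl fun i _ => mkQ_single_eq_mkQ_single_zero f n i (v i),
    ← map_sum]
  congr 1
  exact (map_sum (LinearMap.single R (fun _ => M) 0) _ _).symm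

theorem single_zero_mem_range_one_sub_cyclicShift_iff (x : M) :
    Pi.single 0 x ∈ range (1 - cyclicShift f (n + 1)) ↔ x ∈ range (1 - f ^ (n + 1)) := by
  constructor
  · rintro ⟨u, hu⟩
    have hu_apply (i : Fin (n + 1)) :
        u i - f (u ((finRotate (n + 1))⁻¹ i)) = (Pi.single 0 x : Fin (n + 1) → M) i := by
      rw [← congr_fun hu i]
      rfl
    have hu_pow (i : Fin (n + 1)) : u i = (f ^ (i : ℕ)) (u 0) := by
      induction i using Fin.induction with
      | zero => rfl
      | succ i ih =>
        have hrot : (finRotate (n + 1))⁻¹ i.succ = i.castSucc :=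
          Equiv.Perm.inv_eq_iff_eq.mpr (finRotate_of_lt i.is_lt).symm
        have h := hu_apply i.succ
        rw [hrot, ih, Pi.single_eq_of_ne (Fin.succ_ne_zero i), sub_eq_zero] at h
        rw [h, Fin.val_succ, pow_succ', Module.End.mul_apply, Fin.val_castSucc]
    have hrot : (finRotate (n + 1))⁻¹ 0 = Fin.last n :=
      Equiv.Perm.inv_eq_iff_eq.mpr finRotate_last.symm
    have h := hu_apply 0
    rw [hrot, hu_pow (Fin.last n), Fin.val_last, Pi.single_eq_same] at h
    exact ⟨u 0, by rw [← h, LinearMap.sub_apply, Module.End.one_apply, pow_succ',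
      Module.End.mul_apply]⟩
  · rintro ⟨w, rfl⟩
    have h := Module.End.sub_pow_apply_mem_range_one_sub (cyclicShift f (n + 1)) (n + 1)
      (Pi.single 0 w)
    rwa [cyclicShift_pow_single, finRotate_succ_pow_self, Equiv.Perm.one_apply,
      ← Pi.single_sub] at h

theorem ker_mkQ_comp_single_zero :
    ker ((range (1 - cyclicShift f (n + 1))).mkQ ∘ₗ LinearMap.single R (fun _ => M) 0) =
      range (1 - f ^ (n + 1)) := by
  ext x
  rw [mem_ker, comp_apply, mkQ_apply, Submodule.Quotient.mk_eq_zero]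
  exact single_zero_mem_range_one_sub_cyclicShift_iff f n x

theorem mkQ_comp_single_zero_surjective :
    Function.Surjective
      ((range (1 - cyclicShift f (n + 1))).mkQ ∘ₗ LinearMap.single R (fun _ => M) 0) := by
  intro q
  obtain ⟨v, rfl⟩ := mkQ_surjective _ q
  exact ⟨_, (mkQ_eq_mkQ_single_zero f n v).symm⟩

noncomputable def quotRangeOneSubCyclicShiftEquiv :
    ((Fin (n + 1) → M) ⧸ range (1 - cyclicShift f (n + 1))) ≃ₗ[R]
      M ⧸ range (1 - f ^ (n + 1)) :=
  ((quotEquivOfEq _ _ (ker_mkQ_comp_single_zero f n)).symm.trans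
    (quotKerEquivOfSurjective _ (mkQ_comp_single_zero_surjective f n))).symm

end CyclicShift

/-- for the `k`-cycle `c = (1 2 ⋯ k)` and the endomorphism `P` of
`Fin k → (Fin 2 → ℤ)` given by `(P v) i = v i - γ ⬝ v (c⁻¹ i)` (the block matrix
`Id_{2k} - c ⊗ γ`), the cokernel of `P` is isomorphic as a `ℤ`-module to
`coker(1 - γ^k)`, via an isomorphism identifying the torsion submodules. -/
theorem stmt2 (γ : Matrix.SpecialLinearGroup (Fin 2) ℤ) (k : ℕ) (hk : 1 ≤ k)
    (P : (Fin k → Fin 2 → ℤ) →ₗ[ℤ] (Fin k → Fin 2 → ℤ))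
    (hP : ∀ (v : Fin k → Fin 2 → ℤ) (i : Fin k),
      P v i = v i - Matrix.mulVec (γ : Matrix (Fin 2) (Fin 2) ℤ) (v ((finRotate k)⁻¹ i))) :
    ∃ e : ((Fin k → Fin 2 → ℤ) ⧸ LinearMap.range P) ≃ₗ[ℤ]
        cokerMat (1 - ((γ ^ k : Matrix.SpecialLinearGroup (Fin 2) ℤ) :
          Matrix (Fin 2) (Fin 2) ℤ)),
      Submodule.map e.toLinearMap
          (Submodule.torsion ℤ ((Fin k → Fin 2 → ℤ) ⧸ LinearMap.range P)) =
        Submodule.torsion ℤ (cokerMat (1 - ((γ ^ k : Matrix.SpecialLinearGroup (Fin 2) ℤ) :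
          Matrix (Fin 2) (Fin 2) ℤ))) := by
  obtain ⟨n, rfl⟩ : ∃ n, k = n + 1 := ⟨k - 1, by omega⟩
  have hP_eq : P = 1 - cyclicShift (Matrix.toLin' (γ : Matrix (Fin 2) (Fin 2) ℤ)) (n + 1) := by
    refine LinearMap.ext fun v => funext fun i => ?_
    rw [hP]
    rfl
  have hrange : range (1 - Matrix.toLin' (γ : Matrix (Fin 2) (Fin 2) ℤ) ^ (n + 1)) =
      range (Matrix.toLin' (1 - ((γ ^ (n + 1) : Matrix.SpecialLinearGroup (Fin 2) ℤ) :
        Matrix (Fin 2) (Fin 2) ℤ))) := by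
    rw [Matrix.SpecialLinearGroup.coe_pow, map_sub, Matrix.toLin'_pow, Matrix.toLin'_one]
    rfl
  let e := (quotEquivOfEq _ _ (congrArg range hP_eq)).trans
    ((quotRangeOneSubCyclicShiftEquiv _ n).trans (quotEquivOfEq _ _ hrange))
  exact ⟨e, e.map_torsion⟩
end

section
/- Let c : ℕ → ℕ and let N ≥ 1. In the ring of formal power series PowerSeries ℚ, the coefficient of t^N in the finite product ∏_{k=1}^{N} ((1 - t^k)⁻¹)^{c k} equals ∑_{λ} ∏_{k=1}^{N} C(c k + r_k(λ) - 1, r_k(λ)), where the sum is over all partitions λ of N, r_k(λ) denotes the multiplicity of the part k in λ, and C(a,b) denotes the binomial coefficient. -/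
/-!
Over a field, `((1 - X^k)⁻¹)^c` is the `k`-fold expansion of `(1 - X)^(-c)`, whose `m`-th
coefficient is `C(c + m - 1, m)`; in particular its coefficients vanish off the multiples of `k`.
In the coefficient of `X^N` of a product of such series only the decompositions
`N = ∑ k * m_k` survive, and these are exactly the partitions of `N`, with `m_k = r_k`.
-/

open PowerSeries Finset

theorem Nat.Partition.exists_toFinsuppAntidiag_eq {n : ℕ} {l : ℕ →₀ ℕ}
    (hl : l ∈ (Icc 1 n).finsuppAntidiag n) (hdvd : ∀ k, k ∣ l k) :
    ∃ p : n.Partition, p.toFinsuppAntidiag = l := by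
  obtain ⟨hsum, hsupp⟩ := mem_finsuppAntidiag.mp hl
  let mult : ℕ →₀ ℕ := Finsupp.onFinset (Icc 1 n) (fun k ↦ l k / k) fun k hk ↦
    hsupp (Finsupp.mem_support_iff.mpr fun h ↦ hk (by simp [h]))
  refine ⟨⟨Finsupp.toMultiset mult, fun {k} hk ↦ ?_, ?_⟩, ?_⟩
  · rw [Finsupp.mem_toMultiset] at hk
    exact (mem_Icc.mp (Finsupp.support_onFinset_subset hk)).1
  · rw [Finsupp.sum_toMultiset,
      Finsupp.onFinset_sum (g := fun k m ↦ m • k) _ fun _ ↦ zero_smul ℕ _]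
    exact (sum_congr rfl fun k _ ↦ Nat.div_mul_cancel (hdvd k)).trans hsum
  · ext k
    change mult.toMultiset.count k * k = l k
    rw [Finsupp.count_toMultiset]
    exact Nat.div_mul_cancel (hdvd k)

namespace PowerSeries

theorem coeff_prod_Icc_eq_sum_partition {R : Type*} [CommSemiring R] (φ : ℕ → R⟦X⟧)
    (n : ℕ)
    (hφ : ∀ k ∈ Icc 1 n, ∀ m, ¬ k ∣ m → coeff m (φ k) = 0) :
    coeff n (∏ k ∈ Icc 1 n, φ k) =
      ∑ p : n.Partition, ∏ k ∈ Icc 1 n, coeff (p.parts.count k * k) (φ k) := by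
  rw [coeff_prod]
  refine (sum_of_injOn Nat.Partition.toFinsuppAntidiag
    (Nat.Partition.toFinsuppAntidiag_injective n).injOn
    (fun p _ ↦ p.toFinsuppAntidiag_mem_finsuppAntidiag) ?_ fun p _ ↦ rfl).symm
  intro l hl hl_range
  obtain ⟨k, hk⟩ : ∃ k, ¬ k ∣ l k := by
    by_contra! hdvd
    obtain ⟨p, rfl⟩ := Nat.Partition.exists_toFinsuppAntidiag_eq hl hdvd
    exact hl_range ⟨p, mem_coe.mpr (mem_univ p), rfl⟩
  have hk_mem : k ∈ Icc 1 n :=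
    (mem_finsuppAntidiag.mp hl).2 (Finsupp.mem_support_iff.mpr fun h ↦ hk (h ▸ dvd_zero k))
  exact prod_eq_zero hk_mem (hφ k hk_mem _ hk)

/-- For `c = 0` the truncated subtraction makes `C(m - 1, m)` equal to `1` or `0` according as
`m = 0` or not, matching `invOneSubPow S 0 = 1`. -/
theorem coeff_invOneSubPow (S : Type*) [CommRing S] (c m : ℕ) :
    coeff m (invOneSubPow S c : S⟦X⟧) = Nat.choose (c + m - 1) m := by
  cases c with
  | zero =>
    rcases Nat.eq_zero_or_pos m with rfl | hm
    · simp [invOneSubPow_zero]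
    · simp [invOneSubPow_zero, coeff_one, hm.ne', Nat.choose_eq_zero_of_lt (Nat.sub_lt hm one_pos)]
  | succ d =>
    rw [invOneSubPow_val_succ_eq_mk_add_choose, coeff_mk, Nat.add_right_comm, Nat.add_sub_cancel,
      Nat.choose_symm_add]

theorem inv_one_sub_X_pow_pow_eq_expand {K : Type*} [Field K] {k : ℕ} (hk : k ≠ 0) (c : ℕ) :
    ((1 - X ^ k : K⟦X⟧)⁻¹) ^ c = expand k hk (invOneSubPow K c : K⟦X⟧) := by
  refine left_inv_eq_right_inv (a := (1 - X ^ k) ^ c) ?_ ?_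
  · rw [← mul_pow, PowerSeries.inv_mul_cancel _ (by simp [hk]), one_pow]
  · rw [← expand_X k hk, ← map_one (expand k hk), ← map_sub, ← map_pow, ← map_mul,
      ← invOneSubPow_inv_eq_one_sub_pow, Units.inv_val]

end PowerSeries

theorem stmt14_general (c : ℕ → ℕ) (N : ℕ) :
    PowerSeries.coeff N
        (∏ k ∈ Finset.Icc 1 N, ((1 - (PowerSeries.X : PowerSeries ℚ) ^ k)⁻¹) ^ (c k)) =
      ∑ p : Nat.Partition N, ∏ k ∈ Finset.Icc 1 N,
        (Nat.choose (c k + p.parts.count k - 1) (p.parts.count k) : ℚ) := by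
  have hk_ne : ∀ k ∈ Icc 1 N, k ≠ 0 := fun k hk ↦ Nat.one_le_iff_ne_zero.mp (mem_Icc.mp hk).1
  rw [coeff_prod_Icc_eq_sum_partition _ _ fun k hk m hm ↦ by
    rw [inv_one_sub_X_pow_pow_eq_expand (hk_ne k hk), coeff_expand_of_not_dvd _ _ _ hm]]
  refine sum_congr rfl fun p _ ↦ prod_congr rfl fun k hk ↦ ?_
  rw [inv_one_sub_X_pow_pow_eq_expand (hk_ne k hk), mul_comm, coeff_expand_mul,
    coeff_invOneSubPow]

/-- for `c : ℕ → ℕ` and `N ≥ 1`, the coefficient of `t^N` in the power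
series `∏_{k=1}^N ((1 - t^k)⁻¹)^{c k}` over `ℚ` equals
`∑_{λ ⊢ N} ∏_{k=1}^N C(c k + r_k(λ) - 1, r_k(λ))`, where `r_k(λ)` is the multiplicity of
the part `k` in the partition `λ`. -/
theorem stmt14 (c : ℕ → ℕ) (N : ℕ) (hN : 1 ≤ N) :
    PowerSeries.coeff N
        (∏ k ∈ Finset.Icc 1 N, ((1 - (PowerSeries.X : PowerSeries ℚ) ^ k)⁻¹) ^ (c k)) =
      ∑ p : Nat.Partition N, ∏ k ∈ Finset.Icc 1 N,
        (Nat.choose (c k + p.parts.count k - 1) (p.parts.count k) : ℚ) :=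
  stmt14_general c N
end
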